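/- arXiv:1505.02125 — 3 statements merged into one kernel-verified Lean document; each statement's English description precedes it below -/
import Mathlib

section
/- Let p ≥ 5 be prime and let r with 1 ≤ r ≤ p−1 be such that 24r+1 is a quadratic nonresidue modulo p. Then for all n ≥ 0, f_Ŝ(pn + r) ≡ 0 (mod 3). -/
open scoped Classical

/-- Number of irreducible spin characters of the double cover of `S(n)`:
self-associate spin characters (labelled by partitions of `n` into distinct parts `λ`
with `n - ℓ(λ)` even) counted once, non-self-associate pairs counted twice. -/
noncomputable def fShat (n : ℕ) : ℕ :=
  ((Nat.Partition.distincts n).filter (fun l => Even (n - l.parts.card))).card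
    + 2 * ((Nat.Partition.distincts n).filter (fun l => ¬ Even (n - l.parts.card))).card

open Finset PowerSeries
open scoped PowerSeries.WithPiTopology

/-
Euler's pentagonal number theorem read combinatorially: the signed count
`∑ (-1) ^ ℓ(λ)` over the partitions `λ` of `m` into distinct parts is the `m`-th coefficient of
`∏ (1 - X ^ (i + 1))`, which vanishes unless `m` is a pentagonal number, i.e. unless `24m + 1` is a
square. When `24(pn + r) + 1 ≡ 24r + 1` is a nonresidue mod `p`, it is not a square, so
`|P̂⁺(pn + r)| = |P̂⁻(pn + r)| =: a` and `f_Ŝ(pn + r) = a + 2a = 3a`.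
-/

theorem six_mul_sub_one_sq_eq (k : ℤ) : (6 * k - 1) ^ 2 = 24 * (pentagonal k : ℤ) + 1 := by
  linear_combination (-12) * two_mul_natCast_pentagonal k

theorem card_filter_even_eq_of_sum_neg_one_pow_eq_zero {α : Type*} {s : Finset α} {g : α → ℕ}
    (h : ∑ a ∈ s, (-1 : ℤ) ^ g a = 0) :
    #{a ∈ s | Even (g a)} = #{a ∈ s | ¬Even (g a)} := by
  rw [← sum_filter_add_sum_filter_not s (fun a ↦ Even (g a)),
    sum_congr rfl fun a ha ↦ (mem_filter.1 ha).2.neg_one_pow,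
    sum_congr rfl fun a ha ↦ (Nat.not_even_iff_odd.1 (mem_filter.1 ha).2).neg_one_pow] at h
  simp only [sum_const, nsmul_eq_mul, mul_one, mul_neg] at h
  omega

namespace Nat.Partition

theorem card_parts_le {n : ℕ} (p : n.Partition) : p.parts.card ≤ n := by
  simpa [p.parts_sum] using Multiset.card_nsmul_le_sum (a := 1) fun i hi ↦ p.parts_pos hi

theorem coeff_genFun_distinct_sign (n : ℕ) :
    (genFun fun _ c ↦ if c = 1 then (-1 : ℤ) else 0).coeff n =
      ∑ p ∈ distincts n, (-1) ^ p.parts.card := by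
  rw [coeff_genFun, distincts, sum_filter]
  refine sum_congr rfl fun p _ ↦ ?_
  rw [Finsupp.prod, prod_ite_zero, Multiset.toFinsupp_support]
  simp only [Multiset.toFinsupp_apply, prod_const, Multiset.mem_toFinset,
    ← Multiset.nodup_iff_count_eq_one]
  split_ifs with h
  · rw [Multiset.toFinset_card_of_nodup h]
  · rfl

theorem genFun_distinct_sign_eq_pentagonalSeries :
    genFun (fun _ c ↦ if c = 1 then (-1 : ℤ) else 0) = pentagonalSeries ℤ := by
  refine (hasProd_genFun _).unique ?_
  convert WithPiTopology.hasProd_one_sub_X_pow ℤ using 1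
  · rfl
  funext i
  rw [tsum_eq_single 0 fun j hj ↦ by simp [hj, Algebra.smul_def]]
  simp [Algebra.smul_def, sub_eq_add_neg]

theorem sum_distincts_neg_one_pow_card_eq_zero {n : ℕ} (hn : n ∉ Set.range pentagonal) :
    ∑ p ∈ distincts n, (-1 : ℤ) ^ p.parts.card = 0 := by
  rw [← coeff_genFun_distinct_sign, genFun_distinct_sign_eq_pentagonalSeries,
    coeff_pentagonalSeries_eq_zero ℤ hn]

theorem card_distincts_filter_even_sub_card_eq {n : ℕ} (hn : n ∉ Set.range pentagonal) :
    #{p ∈ distincts n | Even (n - p.parts.card)} =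
      #{p ∈ distincts n | ¬Even (n - p.parts.card)} := by
  refine card_filter_even_eq_of_sum_neg_one_pow_eq_zero ?_
  have sign_sub (p : n.Partition) :
      (-1 : ℤ) ^ (n - p.parts.card) = (-1) ^ n * (-1) ^ p.parts.card := by
    rw [← pow_sub_mul_pow (-1 : ℤ) (card_parts_le p), mul_assoc, ← pow_add,
      Even.neg_one_pow ⟨_, rfl⟩, mul_one]
  simp only [sign_sub, ← mul_sum, sum_distincts_neg_one_pow_card_eq_zero hn, mul_zero]

end Nat.Partition

theorem spchar_hatS_mod3_family_general (p : ℕ)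
    (r : ℕ)
    (hnr : ¬ ∃ x : ZMod p, x ^ 2 = ((24 * r + 1 : ℕ) : ZMod p)) (n : ℕ) :
    fShat (p * n + r) % 3 = 0 := by
  have not_pentagonal : p * n + r ∉ Set.range pentagonal := by
    rintro ⟨k, hk⟩
    refine hnr ⟨((6 * k - 1 : ℤ) : ZMod p), ?_⟩
    have := congrArg (Int.cast : ℤ → ZMod p) (six_mul_sub_one_sq_eq k)
    rw [hk] at this
    push_cast at this ⊢
    rw [this, ZMod.natCast_self]
    ring
  have hcard := Nat.Partition.card_distincts_filter_even_sub_card_eq not_pentagonal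
  rw [fShat, hcard]
  omega

theorem spchar_hatS_mod3_family (p : ℕ) (hp : p.Prime) (hp5 : 5 ≤ p)
    (r : ℕ) (hr1 : 1 ≤ r) (hr2 : r ≤ p - 1)
    (hnr : ¬ ∃ x : ZMod p, x ^ 2 = ((24 * r + 1 : ℕ) : ZMod p)) (n : ℕ) :
    fShat (p * n + r) % 3 = 0 :=
  spchar_hatS_mod3_family_general p r hnr n
end

section
/- Let p ≥ 5 be prime and choose r with 1 ≤ r ≤ p−1 such that 24r+1 is a quadratic nonresidue modulo p. Then for all n ≥ 0, f_Â(pn + r) ≡ 0 (mod 3). -/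
/-!
By Euler's pentagonal number theorem, read combinatorially, a number `m` that is not pentagonal
has as many partitions into an even number of distinct parts as into an odd number. Since
`24 k(3k-1)/2 + 1 = (6k-1)^2`, this happens whenever `24m + 1` is not a square, and then the two
sets counted by `fAhat m` have the same size `c`, so `fAhat m = 3c`. For `m = pn + r` we have
`24m + 1 ≡ 24r + 1 (mod p)`, a nonresidue, so `24m + 1` is not a square.
-/

open scoped Classical

/-- Number of irreducible spin characters of the double cover of `A(n)`. -/
noncomputable def fAhat (n : ℕ) : ℕ :=
  2 * ((Nat.Partition.distincts n).filter (fun l => Even (n - l.parts.card))).card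
    + ((Nat.Partition.distincts n).filter (fun l => ¬ Even (n - l.parts.card))).card

open Finset PowerSeries PowerSeries.WithPiTopology

theorem Finset.sum_neg_one_pow_eq_card_filter_even_sub {α : Type*} (s : Finset α) (c : α → ℕ) :
    ∑ x ∈ s, (-1 : ℤ) ^ c x =
      #(s.filter fun x => Even (c x)) - #(s.filter fun x => ¬ Even (c x)) := by
  rw [← sum_filter_add_sum_filter_not s fun x => Even (c x), sub_eq_add_neg]
  congr 1
  · rw [sum_congr rfl fun x hx => (mem_filter.1 hx).2.neg_one_pow, sum_const, nsmul_one]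
  · rw [sum_congr rfl fun x hx => (Nat.not_even_iff_odd.1 (mem_filter.1 hx).2).neg_one_pow,
      sum_const, smul_neg, nsmul_one]

theorem isSquare_twentyFour_mul_pentagonal_add_one (k : ℤ) :
    IsSquare (24 * (pentagonal k : ℤ) + 1) :=
  ⟨6 * k - 1, by linear_combination 12 * two_mul_natCast_pentagonal k⟩

namespace Nat.Partition

theorem card_parts_le_s7 {n : ℕ} (l : n.Partition) : l.parts.card ≤ n := by
  simpa [l.parts_sum] using Multiset.card_nsmul_le_sum (a := 1) fun _ hx => l.parts_pos hx

theorem parts_toFinsupp_prod_ite_eq_one {n : ℕ} (l : n.Partition) :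
    l.parts.toFinsupp.prod (fun _ c => if c = 1 then (-1 : ℤ) else 0) =
      if l.parts.Nodup then (-1) ^ l.parts.card else 0 := by
  rw [Finsupp.prod, prod_ite_zero]
  simp only [Multiset.toFinsupp_support, Multiset.toFinsupp_apply, prod_const,
    Multiset.mem_toFinset, ← Multiset.nodup_iff_count_eq_one]
  split_ifs with h
  · rw [Multiset.toFinset_card_of_nodup h]
  · rfl

theorem sum_distincts_neg_one_pow_card (n : ℕ) :
    ∑ l ∈ distincts n, (-1 : ℤ) ^ l.parts.card = (pentagonalSeries ℤ).coeff n := by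
  have h : HasProd (fun i ↦ 1 - X ^ (i + 1))
      (genFun fun _ c ↦ if c = 1 then (-1 : ℤ) else 0) := by
    convert! hasProd_genFun (R := ℤ) _ using 1
    ext1 i
    rw [tsum_eq_single 0 fun j hj ↦ by
      simp only [Nat.add_eq_right, hj, if_false]; exact zero_smul _ _]
    simp only [zero_add, if_true, mul_one]
    rw [smul_eq_C_mul, map_neg, map_one, neg_one_mul, sub_eq_add_neg]
  rw [(hasProd_one_sub_X_pow ℤ).unique h, coeff_genFun]
  simp only [parts_toFinsupp_prod_ite_eq_one, ← sum_filter]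
  rfl

theorem card_filter_even_eq_card_filter_not_even {n : ℕ} (h : ¬ IsSquare (24 * (n : ℤ) + 1)) :
    #((distincts n).filter fun l => Even l.parts.card) =
      #((distincts n).filter fun l => ¬ Even l.parts.card) := by
  have hsum : ∑ l ∈ distincts n, (-1 : ℤ) ^ l.parts.card = 0 := by
    rw [sum_distincts_neg_one_pow_card, coeff_pentagonalSeries_eq_zero]
    rintro ⟨k, rfl⟩
    exact h (isSquare_twentyFour_mul_pentagonal_add_one k)
  rw [sum_neg_one_pow_eq_card_filter_even_sub] at hsum
  omega

end Nat.Partition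

theorem three_dvd_fAhat {n : ℕ} (h : ¬ IsSquare (24 * (n : ℤ) + 1)) : 3 ∣ fAhat n := by
  have hparity : ∀ l ∈ Nat.Partition.distincts n,
      Even (n - l.parts.card) ↔ (Even l.parts.card ↔ Even n) := fun l _ => by
    rw [Nat.even_sub l.card_parts_le_s7]
    tauto
  have hcard := Nat.Partition.card_filter_even_eq_card_filter_not_even h
  rw [fAhat, filter_congr hparity, filter_congr fun l hl => not_congr (hparity l hl)]
  by_cases hn : Even n <;> simp only [hn, iff_true, iff_false, not_not] <;> omega

theorem spchar_hatA_mod3_family_general (p : ℕ) (r : ℕ)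
    (hnr : ¬ ∃ x : ZMod p, x ^ 2 = ((24 * r + 1 : ℕ) : ZMod p)) (n : ℕ) :
    fAhat (p * n + r) % 3 = 0 := by
  refine Nat.mod_eq_zero_of_dvd (three_dvd_fAhat ?_)
  rintro ⟨x, hx⟩
  refine hnr ⟨x, ?_⟩
  have hxp := congrArg (Int.cast : ℤ → ZMod p) hx
  push_cast at hxp ⊢
  rw [ZMod.natCast_self] at hxp
  linear_combination -hxp

theorem spchar_hatA_mod3_family (p : ℕ) (hp : p.Prime) (hp5 : 5 ≤ p)
    (r : ℕ) (hr1 : 1 ≤ r) (hr2 : r ≤ p - 1)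
    (hnr : ¬ ∃ x : ZMod p, x ^ 2 = ((24 * r + 1 : ℕ) : ZMod p)) (n : ℕ) :
    fAhat (p * n + r) % 3 = 0 :=
  spchar_hatA_mod3_family_general p r hnr n
end

section
/- As formal power series, the substitution of s = −q and t = −1 in the Quintuple Product Identity yields ∏_{n≥1}(1−(−q)^n)(1+(−q)^n)(1+(−q)^{n−1})(1+q^{2n−1})² = 2·(q²;q²)_∞³/((q;q)_∞(q⁴;q⁴)_∞). -/
open scoped Classical

/-- The formal power series ∏_{n≥1} (1 - q^(c·n)), i.e. (q^c; q^c)_∞.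
The d-th coefficient of the infinite product agrees with that of the partial product
over the first d+1 factors, since all later factors are 1 + O(q^(d+1)). -/
noncomputable def euler (c : ℕ) : PowerSeries ℤ :=
  PowerSeries.mk fun d =>
    PowerSeries.coeff d
      (∏ n ∈ Finset.range (d + 1), (1 - (PowerSeries.X : PowerSeries ℤ) ^ (c * (n + 1))))

/-- The multiplicative inverse of (q^c; q^c)_∞ (its constant coefficient is 1). -/
noncomputable def eulerInv (c : ℕ) : PowerSeries ℤ := (euler c).invOfUnit 1

/-- The product ∏_{n≥1}(1−(−q)^n)(1+(−q)^n)(1+(−q)^(n−1))(1+q^(2n−1))², obtained by putting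
s = −q, t = −1 in the quintuple product; coefficients stabilize in the partial products. -/
noncomputable def quintupleLHS : PowerSeries ℤ :=
  PowerSeries.mk fun d =>
    PowerSeries.coeff d
      (∏ n ∈ Finset.range (d + 1),
        ((1 - (-(PowerSeries.X : PowerSeries ℤ)) ^ (n + 1)) *
          (1 + (-(PowerSeries.X : PowerSeries ℤ)) ^ (n + 1)) *
          (1 + (-(PowerSeries.X : PowerSeries ℤ)) ^ n) *
          (1 + (PowerSeries.X : PowerSeries ℤ) ^ (2 * (n + 1) - 1)) ^ 2))


/-!
Under `s = −q`, `t = −1` the product is `(q²;q²)_∞ (−1;−q)_∞ (−q;q²)_∞²`, and the identity follows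
from two splitting rules for q-Pochhammer symbols, `(a;q)_∞ (−a;q)_∞ = (a²;q²)_∞` and
`(a;q)_∞ = (a;q²)_∞ (aq;q²)_∞`, which give
`(−1;−q)_∞ = 2 (q;q²)_∞ (−q²;q²)_∞`, `(q;q)_∞ = (q;q²)_∞ (q²;q²)_∞`,
`(q⁴;q⁴)_∞ = (q²;q²)_∞ (−q²;q²)_∞`, and Euler's identity
`(q;q²)_∞ (−q;q²)_∞ (−q²;q²)_∞ = (q²;q⁴)_∞ (−q²;q²)_∞ = 1`.

Infinite products are taken in the coefficientwise topology of `ℤ⟦X⟧`. When `X ^ n ∣ F n - 1`,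
the `d`-th coefficient of `∏' n, F n` is that of the first `d + 1` factors; this identifies the
truncated products defining `euler` and `quintupleLHS` with topological ones.
-/

open Filter Finset PowerSeries PowerSeries.WithPiTopology

theorem dvd_mul_sub_one {R : Type*} [CommRing R] {d f g : R} (hf : d ∣ f - 1) (hg : d ∣ g - 1) :
    d ∣ f * g - 1 := by
  rw [show f * g - 1 = (f - 1) * g + (g - 1) by ring]
  exact dvd_add (dvd_mul_of_dvd_left hf g) hg

namespace PowerSeries

section Products

variable {R : Type*} [CommRing R]

theorem X_pow_dvd_one_sub_mul_pow_sub_one (a : R⟦X⟧) {q : R⟦X⟧} (hq : X ∣ q) (n : ℕ) :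
    X ^ n ∣ 1 - a * q ^ n - 1 := by
  rw [sub_sub_cancel_left, dvd_neg, mul_comm]
  exact dvd_mul_of_dvd_left (pow_dvd_pow_of_dvd hq n) a

theorem coeff_prod_eq_coeff_prod_range {F : ℕ → R⟦X⟧} (hF : ∀ n, X ^ n ∣ F n - 1) {d : ℕ}
    {s : Finset ℕ} (hs : range (d + 1) ⊆ s) :
    coeff d (∏ n ∈ s, F n) = coeff d (∏ n ∈ range (d + 1), F n) := by
  set I := Ideal.span {(X : R⟦X⟧) ^ (d + 1)}
  have htail : ∏ n ∈ s \ range (d + 1), F n ≡ ∏ n ∈ s \ range (d + 1), 1 [SMOD I] := by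
    refine SModEq.prod fun n hn => SModEq.sub_mem.2 (Ideal.mem_span_singleton.2 ?_)
    have : d + 1 ≤ n := by simpa using (mem_sdiff.1 hn).2
    exact (pow_dvd_pow X this).trans (hF n)
  have hprod : ∏ n ∈ s, F n ≡ ∏ n ∈ range (d + 1), F n [SMOD I] := by
    rw [← prod_sdiff hs]
    simpa using htail.mul (SModEq.refl (∏ n ∈ range (d + 1), F n))
  have hdvd := Ideal.mem_span_singleton.1 (SModEq.sub_mem.1 hprod)
  simpa [sub_eq_zero] using X_pow_dvd_iff.1 hdvd d (Nat.lt_succ_self d)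

variable [TopologicalSpace R]

theorem hasProd_of_X_pow_dvd_sub_one {F : ℕ → R⟦X⟧} (hF : ∀ n, X ^ n ∣ F n - 1) :
    HasProd F (mk fun d => coeff d (∏ n ∈ range (d + 1), F n)) := by
  refine (tendsto_iff_coeff_tendsto _ _ _ _).2 fun d => tendsto_nhds_of_eventually_eq ?_
  filter_upwards [eventually_ge_atTop (range (d + 1))] with s hs
  rw [coeff_mk, coeff_prod_eq_coeff_prod_range hF hs]

theorem multipliable_of_X_pow_dvd_sub_one {F : ℕ → R⟦X⟧} (hF : ∀ n, X ^ n ∣ F n - 1) :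
    Multipliable F :=
  (hasProd_of_X_pow_dvd_sub_one hF).multipliable

theorem tprod_eq_mk_coeff_prod_range [T2Space R] {F : ℕ → R⟦X⟧} (hF : ∀ n, X ^ n ∣ F n - 1) :
    ∏' n, F n = mk fun d => coeff d (∏ n ∈ range (d + 1), F n) :=
  (hasProd_of_X_pow_dvd_sub_one hF).tprod_eq

end Products

section QPochhammer

variable {R : Type*} [CommRing R] [TopologicalSpace R]

/-- The q-Pochhammer symbol `(a; q)_∞`. -/
noncomputable def qPochhammer (a q : R⟦X⟧) : R⟦X⟧ := ∏' n, (1 - a * q ^ n)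

theorem multipliable_one_sub_mul_pow (a : R⟦X⟧) {q : R⟦X⟧} (hq : X ∣ q) :
    Multipliable fun n => 1 - a * q ^ n :=
  multipliable_of_X_pow_dvd_sub_one (X_pow_dvd_one_sub_mul_pow_sub_one a hq)

variable [T2Space R] {a q : R⟦X⟧}

theorem constantCoeff_qPochhammer (ha : X ∣ a) (hq : X ∣ q) :
    constantCoeff (qPochhammer a q) = 1 := by
  rw [qPochhammer, (multipliable_one_sub_mul_pow a hq).map_tprod _ (continuous_constantCoeff R)]
  simp [X_dvd_iff.1 ha]

theorem isUnit_qPochhammer (ha : X ∣ a) (hq : X ∣ q) : IsUnit (qPochhammer a q) :=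
  isUnit_iff_constantCoeff.2 (by simp [constantCoeff_qPochhammer ha hq])

variable [IsTopologicalRing R]

theorem qPochhammer_eq_one_sub_mul (hq : X ∣ q) :
    qPochhammer a q = (1 - a) * qPochhammer (a * q) q := by
  rw [qPochhammer, tprod_eq_zero_mul'
    (by simpa only [pow_succ', mul_assoc] using multipliable_one_sub_mul_pow (a * q) hq)]
  simp only [pow_zero, mul_one, pow_succ', ← mul_assoc, qPochhammer]

theorem qPochhammer_mul_qPochhammer_neg (hq : X ∣ q) :
    qPochhammer a q * qPochhammer (-a) q = qPochhammer (a ^ 2) (q ^ 2) := by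
  rw [qPochhammer, qPochhammer, qPochhammer, ← (multipliable_one_sub_mul_pow a hq).tprod_mul
    (multipliable_one_sub_mul_pow (-a) hq)]
  exact tprod_congr fun n => by ring

theorem qPochhammer_eq_mul_qPochhammer_sq (hq : X ∣ q) :
    qPochhammer a q = qPochhammer a (q ^ 2) * qPochhammer (a * q) (q ^ 2) := by
  have hq2 : X ∣ q ^ 2 := dvd_pow hq two_ne_zero
  rw [qPochhammer, ← tprod_even_mul_odd (by simpa [pow_mul] using multipliable_one_sub_mul_pow a hq2)
    (by simpa [pow_succ, pow_mul, mul_assoc, mul_comm q] using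
      multipliable_one_sub_mul_pow (a * q) hq2)]
  simp only [qPochhammer, pow_succ, pow_mul, mul_assoc, mul_comm q]

/-- Euler's identity behind "partitions into distinct parts = partitions into odd parts". -/
theorem qPochhammer_mul_qPochhammer_neg_self (ha : X ∣ a) :
    qPochhammer a (a ^ 2) * qPochhammer (-a) a = 1 := by
  have ha2 : X ∣ a ^ 2 := dvd_pow ha two_ne_zero
  refine (isUnit_qPochhammer ha2 ha2).mul_left_cancel ?_
  calc qPochhammer (a ^ 2) (a ^ 2) * (qPochhammer a (a ^ 2) * qPochhammer (-a) a)
      = qPochhammer a a * qPochhammer (-a) a := by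
        rw [qPochhammer_eq_mul_qPochhammer_sq (a := a) ha, ← sq]; ring
    _ = qPochhammer (a ^ 2) (a ^ 2) * 1 := by rw [qPochhammer_mul_qPochhammer_neg ha, mul_one]

end QPochhammer

end PowerSeries

theorem euler_eq_qPochhammer {c : ℕ} (hc : 0 < c) : euler c = qPochhammer (X ^ c) (X ^ c) := by
  rw [qPochhammer, tprod_eq_mk_coeff_prod_range
    (X_pow_dvd_one_sub_mul_pow_sub_one _ (dvd_pow_self X hc.ne'))]
  unfold euler
  congr! 4 with d n
  ring

theorem euler_mul_eulerInv {c : ℕ} (hc : 0 < c) : euler c * eulerInv c = 1 :=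
  mul_invOfUnit _ 1 <| by
    have hX : X ∣ (X : ℤ⟦X⟧) ^ c := dvd_pow_self X hc.ne'
    simp [euler_eq_qPochhammer hc, constantCoeff_qPochhammer hX hX]

theorem quintupleLHS_eq_qPochhammer :
    quintupleLHS = qPochhammer (X ^ 2) (X ^ 2) * qPochhammer (-1) (-X) *
      qPochhammer (-X) (X ^ 2) ^ 2 := by
  have hX2 : (X : ℤ⟦X⟧) ∣ X ^ 2 := dvd_pow_self X two_ne_zero
  have hnegX : (X : ℤ⟦X⟧) ∣ -X := (dvd_neg).2 dvd_rfl
  have hfactor (n : ℕ) : X ^ n ∣ ((1 : ℤ⟦X⟧) - X ^ 2 * (X ^ 2) ^ n) * (1 - -1 * (-X) ^ n) *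
      (1 - -X * (X ^ 2) ^ n) ^ 2 - 1 := by
    have hodd := X_pow_dvd_one_sub_mul_pow_sub_one (-X) hX2 n
    refine dvd_mul_sub_one (dvd_mul_sub_one ?_ ?_) (hodd.trans ?_)
    · exact X_pow_dvd_one_sub_mul_pow_sub_one _ hX2 n
    · exact X_pow_dvd_one_sub_mul_pow_sub_one _ hnegX n
    · have := sub_dvd_pow_sub_pow ((1 : ℤ⟦X⟧) - -X * (X ^ 2) ^ n) 1 2
      rwa [one_pow] at this
  have h₁ := multipliable_one_sub_mul_pow (X ^ 2) hX2
  have h₂ := multipliable_one_sub_mul_pow (-1) hnegX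
  have h₃ := multipliable_one_sub_mul_pow (-X) hX2
  rw [qPochhammer, qPochhammer, qPochhammer, ← h₁.tprod_mul h₂, ← h₃.tprod_pow,
    ← (h₁.mul h₂).tprod_mul (h₃.pow 2), tprod_eq_mk_coeff_prod_range hfactor]
  unfold quintupleLHS
  congr! 4 with d n
  have hsq : ((-X : ℤ⟦X⟧) ^ (n + 1)) ^ 2 = X ^ 2 * (X ^ 2) ^ n := by
    rw [← pow_mul, mul_comm, pow_mul, neg_sq, pow_succ']
  rw [show 2 * (n + 1) - 1 = 2 * n + 1 by omega]
  linear_combination (-(1 + (-X) ^ n) * (1 + X ^ (2 * n + 1)) ^ 2) * hsq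

theorem quintuple_product_at_minusq :
    quintupleLHS = 2 * (euler 2) ^ 3 * eulerInv 1 * eulerInv 4 := by
  have hX2 : (X : ℤ⟦X⟧) ∣ X ^ 2 := dvd_pow_self X two_ne_zero
  have hLHS : quintupleLHS = 2 * euler 2 *
      (qPochhammer X (X ^ 2) * qPochhammer (-X ^ 2) (X ^ 2)) * qPochhammer (-X) (X ^ 2) ^ 2 := by
    have hnegX : (X : ℤ⟦X⟧) ∣ -X := (dvd_neg).2 dvd_rfl
    rw [quintupleLHS_eq_qPochhammer, euler_eq_qPochhammer two_pos,
      qPochhammer_eq_one_sub_mul hnegX, qPochhammer_eq_mul_qPochhammer_sq hnegX]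
    ring_nf
  set A : ℤ⟦X⟧ := qPochhammer X (X ^ 2)
  set B : ℤ⟦X⟧ := qPochhammer (-X) (X ^ 2)
  set C : ℤ⟦X⟧ := qPochhammer (-X ^ 2) (X ^ 2)
  have hE1 : euler 1 = A * euler 2 := by
    rw [euler_eq_qPochhammer one_pos, euler_eq_qPochhammer two_pos, pow_one,
      qPochhammer_eq_mul_qPochhammer_sq dvd_rfl, ← sq]
  have hE4 : euler 4 = euler 2 * C := by
    rw [euler_eq_qPochhammer four_pos, euler_eq_qPochhammer two_pos,
      qPochhammer_mul_qPochhammer_neg hX2, ← pow_mul, show 2 * 2 = 4 from rfl]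
  have hEuler : A * B * C = 1 := by
    rw [qPochhammer_mul_qPochhammer_neg hX2, qPochhammer_mul_qPochhammer_neg_self hX2]
  calc quintupleLHS = quintupleLHS * (euler 1 * eulerInv 1) * (euler 4 * eulerInv 4) := by
        rw [euler_mul_eulerInv one_pos, euler_mul_eulerInv four_pos, mul_one, mul_one]
    _ = 2 * euler 2 ^ 3 * eulerInv 1 * eulerInv 4 * (A * B * C) ^ 2 := by
        rw [hLHS, hE1, hE4]; ring
    _ = 2 * euler 2 ^ 3 * eulerInv 1 * eulerInv 4 := by rw [hEuler, one_pow, mul_one]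
end
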